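/- Let p be prime, m ≥ 1, a ∈ ℚ_p nonzero with |a| ≤ 1, and let f = f_{m+1,a}. For x ∈ ℚ_p with |x| < 1 sufficiently small, the ℤ_p-orbit of x under f equals {y ∈ ℚ_p : y ≡ x (mod a x^{m+1} ℤ_p)}, i.e. orb(x) = x + a x^{m+1} ℤ_p. -/

import Mathlib

/-!
With `b = a xᵐ` the coset `x + a x^(m+1) ℤ_p` is `{y : ‖y / x - 1‖ ≤ ‖b‖}`, and `‖b‖ < min 1 ‖m‖`
for small `x`. Each Hensel root `root z x` lies within `‖b‖` of `1`, hence so does its inverse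
`(x / root z x) / x`. Conversely, on the disc `‖u - 1‖ < ‖m‖` the `m`-th power map multiplies the
distance to `1` by exactly `‖m‖`. So for `y` in the coset and `u = x / y`, `z = (1 - uᵐ) / (m b)`
lies in `ℤ_p`, and `root z x` and `u` are `m`-th roots of the same number in that disc, where
taking `m`-th powers is injective. Hence `root z x = u`, i.e. `x / root z x = y`.
-/

open Finset IsUltrametricDist

lemma norm_eq_of_norm_sub_lt {S : Type*} [SeminormedAddGroup S] [IsUltrametricDist S] {x y : S}
    (h : ‖x - y‖ < ‖y‖) : ‖x‖ = ‖y‖ := by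
  simpa [max_eq_right h.le] using norm_add_eq_max_of_norm_ne_norm h.ne

section Ultrametric

variable {K : Type*} [NormedField K] [IsUltrametricDist K]

lemma norm_eq_one_of_norm_sub_one_lt_one {u : K} (h : ‖u - 1‖ < 1) : ‖u‖ = 1 :=
  (norm_eq_of_norm_sub_lt (by rwa [norm_one])).trans norm_one

lemma norm_inv_sub_one {u : K} (h : ‖u - 1‖ < 1) : ‖u⁻¹ - 1‖ = ‖u - 1‖ := by
  have hu := norm_eq_one_of_norm_sub_one_lt_one h
  have hu0 : u ≠ 0 := norm_ne_zero_iff.mp (by rw [hu]; exact one_ne_zero)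
  rw [← one_div, div_sub_one hu0, norm_div, hu, div_one, norm_sub_rev]

lemma norm_pow_sub_one_le {u : K} (hu : ‖u‖ ≤ 1) (n : ℕ) : ‖u ^ n - 1‖ ≤ ‖u - 1‖ := by
  rw [← geom_sum_mul, norm_mul]
  refine mul_le_of_le_one_left (norm_nonneg _)
    (norm_sum_le_of_forall_le_of_nonneg zero_le_one fun i _ => ?_)
  rw [norm_pow]
  exact pow_le_one₀ (norm_nonneg _) hu

lemma norm_geom_sum_sub_natCast_le {u : K} (hu : ‖u‖ ≤ 1) (n : ℕ) :
    ‖∑ i ∈ range n, u ^ i - n‖ ≤ ‖u - 1‖ := by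
  have : ∑ i ∈ range n, u ^ i - n = ∑ i ∈ range n, (u ^ i - 1) := by
    simp [sum_sub_distrib]
  rw [this]
  exact norm_sum_le_of_forall_le_of_nonneg (norm_nonneg _) fun i _ => norm_pow_sub_one_le hu i

/-- `u ^ n - 1 = (u - 1) * ∑ uⁱ`, and the geometric sum is within `‖u - 1‖ < ‖n‖` of `n`. -/
lemma norm_pow_sub_one_eq {u : K} {n : ℕ} (h : ‖u - 1‖ < ‖(n : K)‖) :
    ‖u ^ n - 1‖ = ‖(n : K)‖ * ‖u - 1‖ := by
  have hu : ‖u‖ ≤ 1 :=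
    (norm_eq_one_of_norm_sub_one_lt_one (h.trans_le (norm_natCast_le_one K n))).le
  rw [← geom_sum_mul, norm_mul,
    norm_eq_of_norm_sub_lt ((norm_geom_sum_sub_natCast_le hu n).trans_lt h)]

lemma eq_of_pow_eq_of_norm_sub_one_lt {u v : K} {n : ℕ} (hu : ‖u - 1‖ < ‖(n : K)‖)
    (hv : ‖v - 1‖ < ‖(n : K)‖) (h : u ^ n = v ^ n) : u = v := by
  have hv1 : ‖v‖ = 1 :=
    norm_eq_one_of_norm_sub_one_lt_one (hv.trans_le (norm_natCast_le_one K n))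
  have hv0 : v ≠ 0 := norm_ne_zero_iff.mp (by rw [hv1]; exact one_ne_zero)
  have huv : ‖u / v - 1‖ < ‖(n : K)‖ := by
    rw [div_sub_one hv0, norm_div, hv1, div_one, ← sub_sub_sub_cancel_right u v 1, sub_eq_add_neg]
    exact (norm_add_le_max _ _).trans_lt (max_lt hu (by rwa [norm_neg]))
  have key := norm_pow_sub_one_eq huv
  rw [div_pow, h, div_self (pow_ne_zero _ hv0), sub_self, norm_zero, eq_comm,
    mul_eq_zero, norm_eq_zero, norm_eq_zero, sub_eq_zero, div_eq_one_iff_eq hv0] at key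
  exact key.resolve_left (norm_ne_zero_iff.mp (((norm_nonneg _).trans_lt hu).ne'))

end Ultrametric

section Padic

variable {p : ℕ} [Fact p.Prime]

lemma exists_padicInt_eq_add_mul_iff {b x y : ℚ_[p]} (hb : b ≠ 0) (hx : x ≠ 0) :
    (∃ c : ℤ_[p], y = x + b * x * c) ↔ ‖y / x - 1‖ ≤ ‖b‖ := by
  constructor
  · rintro ⟨c, rfl⟩
    have : (x + b * x * c) / x - 1 = b * c := by field_simp; ring
    rw [this, norm_mul]
    exact mul_le_of_le_one_right (norm_nonneg _) (PadicInt.norm_le_one c)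
  · intro h
    refine ⟨⟨(y / x - 1) / b, ?_⟩, ?_⟩
    · rw [norm_div]
      exact div_le_one_of_le₀ h (norm_nonneg _)
    · field_simp
      ring

lemma exists_padicInt_one_sub_mul_eq_pow {b u : ℚ_[p]} {n : ℕ} (hb : b ≠ 0)
    (hu : ‖u - 1‖ ≤ ‖b‖) (hbn : ‖b‖ < ‖(n : ℚ_[p])‖) :
    ∃ z : ℤ_[p], 1 - z * b * n = u ^ n := by
  have hn : (n : ℚ_[p]) ≠ 0 := norm_pos_iff.mp ((norm_nonneg _).trans_lt hbn)
  refine ⟨⟨(1 - u ^ n) / (b * n), ?_⟩, ?_⟩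
  · rw [norm_div, norm_sub_rev, norm_pow_sub_one_eq (hu.trans_lt hbn), norm_mul, mul_comm ‖b‖]
    exact div_le_one_of_le₀ (mul_le_mul_of_nonneg_left hu (norm_nonneg _)) (by positivity)
  · field_simp
    ring

lemma norm_sub_one_le_of_norm_sub_one_sub_le {r a x : ℚ_[p]} {z : ℤ_[p]} {m : ℕ}
    (hx : ‖x‖ ≤ 1) (h : ‖r - (1 - z * a * x ^ m)‖ ≤ ‖a * x ^ (m + 1)‖) :
    ‖r - 1‖ ≤ ‖a * x ^ m‖ := by
  have hxm : ‖a * x ^ (m + 1)‖ ≤ ‖a * x ^ m‖ := by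
    rw [pow_succ, ← mul_assoc, norm_mul _ x]
    exact mul_le_of_le_one_right (norm_nonneg _) hx
  have hz : ‖(z : ℚ_[p]) * a * x ^ m‖ ≤ ‖a * x ^ m‖ := by
    rw [mul_assoc, norm_mul]
    exact mul_le_of_le_one_left (norm_nonneg _) (PadicInt.norm_le_one z)
  calc ‖r - 1‖ = ‖(r - (1 - z * a * x ^ m)) + -(z * a * x ^ m)‖ := by ring_nf
    _ ≤ ‖a * x ^ m‖ := (norm_add_le_max _ _).trans (max_le (h.trans hxm) (by rwa [norm_neg]))

end Padic

/-- for the flow `f = f_{m+1,a}` on `ℚ_p` (with the canonical Hensel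
`m`-th root `root z x ≡ 1 - z a x^m (mod a x^{m+1})`), for `x` nonzero and
sufficiently small the `ℤ_p`-orbit of `x`, `orb(x) = {f^{∘z}(x) : z ∈ ℤ_p}`,
equals the coset `x + a x^{m+1} ℤ_p`. -/
theorem stmt5 {p : ℕ} [Fact p.Prime]
    (m : ℕ) (hm : 1 ≤ m) (a : ℚ_[p]) (ha0 : a ≠ 0) (ha1 : ‖a‖ ≤ 1)
    (root : ℤ_[p] → ℚ_[p] → ℚ_[p])
    (hroot : ∀ (z : ℤ_[p]) (x : ℚ_[p]), 0 < ‖x‖ → ‖x‖ < 1 →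
        (root z x) ^ m = 1 - (z : ℚ_[p]) * a * m * x ^ m ∧
        ‖root z x - (1 - (z : ℚ_[p]) * a * x ^ m)‖ ≤ ‖a * x ^ (m + 1)‖) :
    ∃ ε > 0, ∀ x : ℚ_[p], 0 < ‖x‖ → ‖x‖ < ε →
      {y : ℚ_[p] | ∃ z : ℤ_[p], y = x / root z x} =
        {y : ℚ_[p] | ∃ c : ℤ_[p], y = x + a * x ^ (m + 1) * (c : ℚ_[p])} := by
  have hm0 : 0 < ‖(m : ℚ_[p])‖ := norm_pos_iff.mpr (Nat.cast_ne_zero.mpr (by omega))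
  refine ⟨min 1 ‖(m : ℚ_[p])‖, lt_min one_pos hm0, fun x hx0 hxε => ?_⟩
  have hx1 : ‖x‖ < 1 := hxε.trans_le (min_le_left _ _)
  have hx : x ≠ 0 := norm_pos_iff.mp hx0
  have hbx : ‖a * x ^ m‖ ≤ ‖x‖ := by
    rw [norm_mul, norm_pow]
    exact (mul_le_of_le_one_left (by positivity) ha1).trans
      (pow_le_of_le_one (norm_nonneg _) hx1.le (Nat.one_le_iff_ne_zero.mp hm))
  have hb0 : a * x ^ m ≠ 0 := mul_ne_zero ha0 (pow_ne_zero _ hx)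
  have hb1 : ‖a * x ^ m‖ < 1 := hbx.trans_lt hx1
  have hbm : ‖a * x ^ m‖ < ‖(m : ℚ_[p])‖ := hbx.trans_lt (hxε.trans_le (min_le_right _ _))
  have hroot_near (z : ℤ_[p]) : ‖root z x - 1‖ ≤ ‖a * x ^ m‖ :=
    norm_sub_one_le_of_norm_sub_one_sub_le hx1.le (hroot z x hx0 hx1).2
  ext y
  rw [Set.mem_ofPred_eq, Set.mem_ofPred_eq, pow_succ, ← mul_assoc,
    exists_padicInt_eq_add_mul_iff hb0 hx]
  constructor
  · rintro ⟨z, rfl⟩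
    rw [div_div_cancel_left' hx, norm_inv_sub_one ((hroot_near z).trans_lt hb1)]
    exact hroot_near z
  · intro hy
    have hu : ‖(y / x)⁻¹ - 1‖ ≤ ‖a * x ^ m‖ := (norm_inv_sub_one (hy.trans_lt hb1)).trans_le hy
    obtain ⟨z, hz⟩ := exists_padicInt_one_sub_mul_eq_pow hb0 hu hbm
    have hpow : root z x ^ m = (y / x)⁻¹ ^ m := by
      rw [(hroot z x hx0 hx1).1, ← hz]
      ring
    refine ⟨z, ?_⟩
    rw [eq_of_pow_eq_of_norm_sub_one_lt ((hroot_near z).trans_lt hbm) (hu.trans_lt hbm) hpow,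
      inv_div, div_div_cancel₀ hx]
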